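/- Let n, K ∈ ℕ with K ≥ 1, Δt > 0 with Δt ≤ 1, ζ ∈ [1/2, 1], let M ∈ ℝ^{n×n} be symmetric positive definite and A ∈ ℝ^{n×n} symmetric positive semidefinite. Let e, ė : {0,…,K} → ℝⁿ and r : {1,…,K} → ℝⁿ satisfy e⁰ = 0, ė⁰ = 0 and, for every k ∈ {1,…,K}, the error scheme equations (1/Δt)·M(ė^k − ė^{k−1}) + A((1−ζ)e^{k−1} + ζe^k) = r^k and (1/Δt)(e^k − e^{k−1}) = (1−ζ)ė^{k−1} + ζė^k. Then (Δt·Σ_{k=1}^{K} (e^k)ᵀAe^k)^{1/2} ≤ 2·(Σ_{k=1}^{K} (Δt·Σ_{k'=1}^{k} ((r^{k'})ᵀM⁻¹r^{k'})^{1/2})²)^{1/2}. -/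

import Mathlib

/-!
Testing the first equation of step `k` with `Δt` times the `ζ`-average
`(1 - ζ) ė^{k-1} + ζ ė^k` of the velocities, and using the second equation to rewrite the
stiffness term, gives the discrete energy identity
`E_k² - E_{k-1}² + (2ζ - 1)(‖ė^k - ė^{k-1}‖²_M + ‖e^k - e^{k-1}‖²_A) = 2Δt rᵏ·(average)`
for `E_k² = ‖ė^k‖²_M + ‖e^k‖²_A`. For `ζ ≥ 1/2` the numerical dissipation is nonnegative, and
the duality bound `r·v ≤ ‖r‖_{M⁻¹} ‖v‖_M` yields `E_k ≤ E_{k-1} + 2Δt ‖rᵏ‖_{M⁻¹}`.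
Summing from `E_0 = 0` gives `‖e^k‖_A ≤ E_k ≤ 2Δt Σ_{k' ≤ k} ‖r^{k'}‖_{M⁻¹}`; squaring and
summing over `k`, the remaining factor `Δt ≤ 1` is dropped.
-/

open Matrix Finset

namespace Matrix

theorem PosSemidef.isSymm {ι : Type*} {B : Matrix ι ι ℝ} (hB : B.PosSemidef) : B.IsSymm :=
  isHermitian_iff_isSymm.mp hB.isHermitian

variable {ι : Type*} [Fintype ι]

theorem IsSymm.dotProduct_mulVec_comm {α : Type*} [CommSemiring α] {B : Matrix ι ι α}
    (hB : B.IsSymm) (x y : ι → α) : x ⬝ᵥ B *ᵥ y = y ⬝ᵥ B *ᵥ x := by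
  rw [← dotProduct_transpose_mulVec, hB.eq]

theorem PosSemidef.dotProduct_mulVec_self_nonneg {B : Matrix ι ι ℝ} (hB : B.PosSemidef)
    (x : ι → ℝ) : 0 ≤ x ⬝ᵥ B *ᵥ x := by
  simpa only [star_trivial] using hB.dotProduct_mulVec_nonneg x

theorem PosSemidef.dotProduct_mulVec_sq_le {B : Matrix ι ι ℝ} (hB : B.PosSemidef)
    (x y : ι → ℝ) : (x ⬝ᵥ B *ᵥ y) ^ 2 ≤ (x ⬝ᵥ B *ᵥ x) * (y ⬝ᵥ B *ᵥ y) := by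
  have hyx := hB.isSymm.dotProduct_mulVec_comm y x
  have hdiscr := discrim_le_zero (a := y ⬝ᵥ B *ᵥ y) (b := 2 * (x ⬝ᵥ B *ᵥ y))
    (c := x ⬝ᵥ B *ᵥ x) fun t => by
      have := hB.dotProduct_mulVec_self_nonneg (x + t • y)
      simp only [mulVec_add, mulVec_smul, dotProduct_add, add_dotProduct,
        dotProduct_smul, smul_dotProduct, smul_eq_mul, hyx] at this
      linarith
  rw [discrim] at hdiscr
  linarith

theorem PosSemidef.dotProduct_mulVec_le_sqrt_mul_sqrt {B : Matrix ι ι ℝ} (hB : B.PosSemidef)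
    (x y : ι → ℝ) : x ⬝ᵥ B *ᵥ y ≤ √(x ⬝ᵥ B *ᵥ x) * √(y ⬝ᵥ B *ᵥ y) := by
  rw [← Real.sqrt_mul (hB.dotProduct_mulVec_self_nonneg x)]
  exact (le_abs_self _).trans (Real.abs_le_sqrt (hB.dotProduct_mulVec_sq_le x y))

theorem PosDef.dotProduct_le_sqrt_inv_mul_sqrt [DecidableEq ι] {M : Matrix ι ι ℝ}
    (hM : M.PosDef) (r x : ι → ℝ) : r ⬝ᵥ x ≤ √(r ⬝ᵥ M⁻¹ *ᵥ r) * √(x ⬝ᵥ M *ᵥ x) := by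
  have hr : M *ᵥ M⁻¹ *ᵥ r = r := by
    rw [mulVec_mulVec, mul_nonsing_inv _ ((isUnit_iff_isUnit_det M).mp hM.isUnit), one_mulVec]
  have hsymm := hM.posSemidef.isSymm
  calc r ⬝ᵥ x = M⁻¹ *ᵥ r ⬝ᵥ M *ᵥ x := by
        rw [hsymm.dotProduct_mulVec_comm, hr, dotProduct_comm]
    _ ≤ √(M⁻¹ *ᵥ r ⬝ᵥ M *ᵥ M⁻¹ *ᵥ r) * √(x ⬝ᵥ M *ᵥ x) :=
        hM.posSemidef.dotProduct_mulVec_le_sqrt_mul_sqrt _ _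
    _ = √(r ⬝ᵥ M⁻¹ *ᵥ r) * √(x ⬝ᵥ M *ᵥ x) := by rw [hr, dotProduct_comm]

theorem IsSymm.average_dotProduct_mulVec_sub {B : Matrix ι ι ℝ} (hB : B.IsSymm) (ζ : ℝ)
    (a b : ι → ℝ) :
    ((1 - ζ) • a + ζ • b) ⬝ᵥ B *ᵥ (b - a) =
      (b ⬝ᵥ B *ᵥ b - a ⬝ᵥ B *ᵥ a) / 2 + (ζ - 1 / 2) * ((b - a) ⬝ᵥ B *ᵥ (b - a)) := by
  have hab := hB.dotProduct_mulVec_comm a b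
  simp only [mulVec_sub, dotProduct_sub, sub_dotProduct, add_dotProduct, smul_dotProduct,
    smul_eq_mul]
  linear_combination hab / 2

end Matrix

theorem le_add_of_sq_le_sq_add_mul {x y c : ℝ} (hy : 0 ≤ y) (hc : 0 ≤ c)
    (h : x ^ 2 ≤ y ^ 2 + c * (x + y)) : x ≤ y + c := by
  nlinarith

theorem le_add_sum_Icc_of_le_add {F c : ℕ → ℝ} {K : ℕ}
    (h : ∀ k, 1 ≤ k → k ≤ K → F k ≤ F (k - 1) + c k) :
    ∀ k ≤ K, F k ≤ F 0 + ∑ i ∈ Icc 1 k, c i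
  | 0, _ => by simp
  | k + 1, hk => by
    rw [sum_Icc_succ_top (by omega), ← add_assoc]
    simpa using (h (k + 1) (by omega) hk).trans
      (add_le_add_left (le_add_sum_Icc_of_le_add h k (by omega)) _)

namespace ZetaScheme

variable {ι : Type*} [Fintype ι] {M A : Matrix ι ι ℝ} {Δt ζ : ℝ}

noncomputable def energyNorm (M A : Matrix ι ι ℝ) (e de : ι → ℝ) : ℝ :=
  √(de ⬝ᵥ M *ᵥ de + e ⬝ᵥ A *ᵥ e)

theorem sq_energyNorm (hM : M.PosSemidef) (hA : A.PosSemidef) (e de : ι → ℝ) :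
    energyNorm M A e de ^ 2 = de ⬝ᵥ M *ᵥ de + e ⬝ᵥ A *ᵥ e :=
  Real.sq_sqrt (add_nonneg (hM.dotProduct_mulVec_self_nonneg de)
    (hA.dotProduct_mulVec_self_nonneg e))

theorem energyNorm_zero_zero : energyNorm M A 0 0 = 0 := by
  simp [energyNorm]

theorem sqrt_dotProduct_mulVec_le_energyNorm (hA : A.PosSemidef) (e de : ι → ℝ) :
    √(de ⬝ᵥ M *ᵥ de) ≤ energyNorm M A e de :=
  Real.sqrt_le_sqrt (le_add_of_nonneg_right (hA.dotProduct_mulVec_self_nonneg e))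

theorem dotProduct_mulVec_le_sq_energyNorm (hM : M.PosSemidef) (hA : A.PosSemidef)
    (e de : ι → ℝ) : e ⬝ᵥ A *ᵥ e ≤ energyNorm M A e de ^ 2 := by
  rw [sq_energyNorm hM hA]
  exact le_add_of_nonneg_left (hM.dotProduct_mulVec_self_nonneg de)

variable {e₀ e₁ de₀ de₁ r : ι → ℝ}

theorem energy_identity (hM : M.IsSymm) (hA : A.IsSymm) (hΔt : Δt ≠ 0)
    (h₁ : (1 / Δt) • (M *ᵥ (de₁ - de₀)) + A *ᵥ ((1 - ζ) • e₀ + ζ • e₁) = r)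
    (h₂ : (1 / Δt) • (e₁ - e₀) = (1 - ζ) • de₀ + ζ • de₁) :
    (de₁ ⬝ᵥ M *ᵥ de₁ + e₁ ⬝ᵥ A *ᵥ e₁) - (de₀ ⬝ᵥ M *ᵥ de₀ + e₀ ⬝ᵥ A *ᵥ e₀)
      + (2 * ζ - 1) * ((de₁ - de₀) ⬝ᵥ M *ᵥ (de₁ - de₀) + (e₁ - e₀) ⬝ᵥ A *ᵥ (e₁ - e₀))
      = 2 * Δt * (((1 - ζ) • de₀ + ζ • de₁) ⬝ᵥ r) := by
  set d := (1 - ζ) • de₀ + ζ • de₁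
  have hincr : e₁ - e₀ = Δt • d := by
    rw [← h₂, smul_smul, mul_one_div_cancel hΔt, one_smul]
  have htest : Δt * (d ⬝ᵥ r) =
      d ⬝ᵥ M *ᵥ (de₁ - de₀) + ((1 - ζ) • e₀ + ζ • e₁) ⬝ᵥ A *ᵥ (e₁ - e₀) := by
    rw [← h₁, hA.dotProduct_mulVec_comm _ (e₁ - e₀), hincr]
    simp only [dotProduct_add, dotProduct_smul, smul_dotProduct, smul_eq_mul]
    field_simp
  rw [mul_assoc, htest, hM.average_dotProduct_mulVec_sub, hA.average_dotProduct_mulVec_sub]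
  ring

theorem energyNorm_le_add_of_step [DecidableEq ι] (hM : M.PosDef) (hA : A.PosSemidef)
    (hΔt : 0 < Δt) (hζ : ζ ∈ Set.Icc (1 / 2 : ℝ) 1)
    (h₁ : (1 / Δt) • (M *ᵥ (de₁ - de₀)) + A *ᵥ ((1 - ζ) • e₀ + ζ • e₁) = r)
    (h₂ : (1 / Δt) • (e₁ - e₀) = (1 - ζ) • de₀ + ζ • de₁) :
    energyNorm M A e₁ de₁ ≤ energyNorm M A e₀ de₀ + 2 * Δt * √(r ⬝ᵥ M⁻¹ *ᵥ r) := by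
  obtain ⟨hζ₀, hζ₁⟩ := hζ
  set ρ := √(r ⬝ᵥ M⁻¹ *ᵥ r)
  have hρ : 0 ≤ ρ := Real.sqrt_nonneg _
  have hdual : ∀ e de, de ⬝ᵥ r ≤ ρ * energyNorm M A e de := fun e de => by
    rw [dotProduct_comm]
    exact (hM.dotProduct_le_sqrt_inv_mul_sqrt r de).trans
      (mul_le_mul_of_nonneg_left (sqrt_dotProduct_mulVec_le_energyNorm hA e de) hρ)
  have hforcing : ((1 - ζ) • de₀ + ζ • de₁) ⬝ᵥ r ≤
      ρ * (energyNorm M A e₁ de₁ + energyNorm M A e₀ de₀) := by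
    simp only [add_dotProduct, smul_dotProduct, smul_eq_mul]
    have hF₀ : 0 ≤ ρ * energyNorm M A e₀ de₀ := mul_nonneg hρ (Real.sqrt_nonneg _)
    have hF₁ : 0 ≤ ρ * energyNorm M A e₁ de₁ := mul_nonneg hρ (Real.sqrt_nonneg _)
    nlinarith [hdual e₀ de₀, hdual e₁ de₁]
  have hdissipation : 0 ≤ (2 * ζ - 1) *
      ((de₁ - de₀) ⬝ᵥ M *ᵥ (de₁ - de₀) + (e₁ - e₀) ⬝ᵥ A *ᵥ (e₁ - e₀)) :=
    mul_nonneg (by linarith) (add_nonneg (hM.posSemidef.dotProduct_mulVec_self_nonneg _)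
      (hA.dotProduct_mulVec_self_nonneg _))
  have hidentity := energy_identity hM.posSemidef.isSymm hA.isSymm hΔt.ne' h₁ h₂
  rw [← sq_energyNorm hM.posSemidef hA, ← sq_energyNorm hM.posSemidef hA] at hidentity
  refine le_add_of_sq_le_sq_add_mul (Real.sqrt_nonneg _) (by positivity) ?_
  nlinarith [mul_le_mul_of_nonneg_left hforcing hΔt.le]

end ZetaScheme

open ZetaScheme

theorem error_scheme_stiffness_seminorm_estimate_general (n K : ℕ)
    (Δt : ℝ) (hΔt : 0 < Δt) (hΔt1 : Δt ≤ 1)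
    (ζ : ℝ) (hζ : ζ ∈ Set.Icc (1 / 2 : ℝ) 1)
    (M A : Matrix (Fin n) (Fin n) ℝ) (hM : M.PosDef) (hA : A.PosSemidef)
    (e de r : ℕ → Fin n → ℝ)
    (he0 : e 0 = 0) (hde0 : de 0 = 0)
    (h1 : ∀ k, 1 ≤ k → k ≤ K →
      (1 / Δt) • (M *ᵥ (de k - de (k - 1))) +
        A *ᵥ ((1 - ζ) • e (k - 1) + ζ • e k) = r k)
    (h2 : ∀ k, 1 ≤ k → k ≤ K →
      (1 / Δt) • (e k - e (k - 1)) = (1 - ζ) • de (k - 1) + ζ • de k) :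
    Real.sqrt (Δt * ∑ k ∈ Finset.Icc 1 K, e k ⬝ᵥ (A *ᵥ e k)) ≤
      2 * Real.sqrt (∑ k ∈ Finset.Icc 1 K,
        (Δt * ∑ k' ∈ Finset.Icc 1 k, Real.sqrt (r k' ⬝ᵥ (M⁻¹ *ᵥ r k'))) ^ 2) := by
  set ρ : ℕ → ℝ := fun k => √(r k ⬝ᵥ M⁻¹ *ᵥ r k)
  have hstep : ∀ k, 1 ≤ k → k ≤ K → energyNorm M A (e k) (de k) ≤
      energyNorm M A (e (k - 1)) (de (k - 1)) + 2 * Δt * ρ k := fun k hk hkK =>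
    energyNorm_le_add_of_step hM hA hΔt hζ (h1 k hk hkK) (h2 k hk hkK)
  have henergy : ∀ k ≤ K, energyNorm M A (e k) (de k) ≤ 2 * (Δt * ∑ i ∈ Icc 1 k, ρ i) :=
    fun k hk => (le_add_sum_Icc_of_le_add hstep k hk).trans_eq <| by
      rw [he0, hde0, energyNorm_zero_zero, zero_add, ← mul_sum, mul_assoc]
  have hterm : ∀ k ∈ Icc 1 K, e k ⬝ᵥ A *ᵥ e k ≤ (2 * (Δt * ∑ i ∈ Icc 1 k, ρ i)) ^ 2 :=
    fun k hk => (dotProduct_mulVec_le_sq_energyNorm hM.posSemidef hA (e k) (de k)).trans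
      (pow_le_pow_left₀ (Real.sqrt_nonneg _) (henergy k (mem_Icc.mp hk).2) 2)
  refine Real.sqrt_le_iff.mpr ⟨by positivity, ?_⟩
  rw [mul_pow, Real.sq_sqrt (sum_nonneg fun _ _ => sq_nonneg _), mul_sum _ _ (2 ^ 2 : ℝ)]
  calc Δt * ∑ k ∈ Icc 1 K, e k ⬝ᵥ A *ᵥ e k
      ≤ ∑ k ∈ Icc 1 K, e k ⬝ᵥ A *ᵥ e k :=
        mul_le_of_le_one_left (sum_nonneg fun k _ => hA.dotProduct_mulVec_self_nonneg (e k)) hΔt1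
    _ ≤ _ := sum_le_sum fun k hk => (hterm k hk).trans_eq (mul_pow _ _ _)

/-- A posteriori estimate for the time-discrete `L²`-in-time stiffness-energy
seminorm of the state error for the ζ-scheme (`ζ ∈ [1/2,1]`, `Δt ≤ 1`,
`M` symmetric positive definite, `A` symmetric positive semidefinite),
for trajectories with zero initial error:
`(Δt·Σ_{k=1}^{K} (e^k)ᵀAe^k)^{1/2}
  ≤ 2·(Σ_{k=1}^{K} (Δt·Σ_{k'=1}^{k} ((r^{k'})ᵀM⁻¹r^{k'})^{1/2})²)^{1/2}`. -/
theorem error_scheme_stiffness_seminorm_estimate (n K : ℕ) (hK : 1 ≤ K)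
    (Δt : ℝ) (hΔt : 0 < Δt) (hΔt1 : Δt ≤ 1)
    (ζ : ℝ) (hζ : ζ ∈ Set.Icc (1 / 2 : ℝ) 1)
    (M A : Matrix (Fin n) (Fin n) ℝ) (hM : M.PosDef) (hA : A.PosSemidef)
    (e de r : ℕ → Fin n → ℝ)
    (he0 : e 0 = 0) (hde0 : de 0 = 0)
    (h1 : ∀ k, 1 ≤ k → k ≤ K →
      (1 / Δt) • (M *ᵥ (de k - de (k - 1))) +
        A *ᵥ ((1 - ζ) • e (k - 1) + ζ • e k) = r k)
    (h2 : ∀ k, 1 ≤ k → k ≤ K →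
      (1 / Δt) • (e k - e (k - 1)) = (1 - ζ) • de (k - 1) + ζ • de k) :
    Real.sqrt (Δt * ∑ k ∈ Finset.Icc 1 K, e k ⬝ᵥ (A *ᵥ e k)) ≤
      2 * Real.sqrt (∑ k ∈ Finset.Icc 1 K,
        (Δt * ∑ k' ∈ Finset.Icc 1 k, Real.sqrt (r k' ⬝ᵥ (M⁻¹ *ᵥ r k'))) ^ 2) :=
  error_scheme_stiffness_seminorm_estimate_general n K Δt hΔt hΔt1 ζ hζ M A hM hA e de r he0 hde0 h1
    h2
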